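/- arXiv:2210.04589 — 2 statements merged into one kernel-verified Lean document; each statement's English description precedes it below -/
import Mathlib

section
/- Let $T$ be a relative Rota-Baxter operator on a Leibniz triple system $(\mathfrak{L},\{\cdot,\cdot,\cdot\})$ with respect to a representation $(r,m,l)$ on $V$. Define $l_T(u,v)x = \{Tu,Tv,x\} - T(r(Tv,x)u + m(Tu,x)v)$, $m_T(u,v)x = \{Tu,x,Tv\} - T(l(Tu,x)v + r(x,Tv)u)$, $r_T(u,v)x = \{x,Tu,Tv\} - T(l(x,Tu)v + m(x,Tv)u)$. Then $(r_T,m_T,l_T)$ is a representation of the Leibniz triple system $(V,\{\cdot,\cdot,\cdot\}_T)$ on $\mathfrak{L}$. -/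
/-!
On the semidirect product `L ⋉ V`, the lift `N (x, u) = (T u, 0)` squares to zero, and `T` being
a relative Rota–Baxter operator says exactly that `N` is a Rota–Baxter operator of weight zero for
the semidirect bracket. A square-zero Rota–Baxter operator is Nijenhuis, and its deformed bracket
`{Na, Nb, c} + {Na, b, Nc} + {a, Nb, Nc} - N ({Na, b, c} + {a, Nb, c} + {a, b, Nc})` is again a
Leibniz triple system: each identity for it is a combination of three instances of the same
identity for the original bracket, in which the Rota–Baxter relation unfolds `{Nc, Nd, Ne}`.
After swapping the factors, this deformed bracket on `L × V` is the semidirect product bracket of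
`(V, {·,·,·}_T)` with `(r_T, m_T, l_T)`.
-/

def IsTrilin (K : Type*) [Field K] {L M : Type*} [AddCommGroup L] [Module K L]
    [AddCommGroup M] [Module K M] (t : L → L → L → M) : Prop :=
  (∀ y z, IsLinearMap K fun x => t x y z) ∧ (∀ x z, IsLinearMap K fun y => t x y z) ∧
    (∀ x y, IsLinearMap K fun z => t x y z)

def LTSIdent {L : Type*} [AddCommGroup L] (t : L → L → L → L) : Prop :=
  (∀ a b c d e, t a b (t c d e) =
      t (t a b c) d e - t (t a b d) c e - t (t a b e) c d + t (t a b e) d c) ∧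
  (∀ a b c d e, t a (t b c d) e =
      t (t a b c) d e - t (t a c b) d e - t (t a d b) c e + t (t a d c) b e)

def IsLTS (K : Type*) [Field K] {L : Type*} [AddCommGroup L] [Module K L]
    (t : L → L → L → L) : Prop := IsTrilin K t ∧ LTSIdent t

def sd {L V : Type*} [AddCommGroup L] [AddCommGroup V]
    (t : L → L → L → L) (l m r : L → L → V → V) :
    L × V → L × V → L × V → L × V :=
  fun p q s => (t p.1 q.1 s.1, l p.1 q.1 s.2 + m p.1 s.1 q.2 + r q.1 s.1 p.2)

def IsRep (K : Type*) [Field K] {L V : Type*} [AddCommGroup L] [Module K L]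
    [AddCommGroup V] [Module K V] (t : L → L → L → L) (l m r : L → L → V → V) : Prop :=
  IsLTS K (sd t l m r)

def IsRRB {K : Type*} [Field K] {L V : Type*} [AddCommGroup L] [Module K L]
    [AddCommGroup V] [Module K V] (t : L → L → L → L) (l m r : L → L → V → V)
    (T : V →ₗ[K] L) : Prop :=
  ∀ u v w, t (T u) (T v) (T w) =
    T (l (T u) (T v) w + m (T u) (T w) v + r (T v) (T w) u)

def IsRB {K : Type*} [Field K] {L : Type*} [AddCommGroup L] [Module K L]
    (t : L → L → L → L) (R : L →ₗ[K] L) : Prop :=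
  ∀ x y z, t (R x) (R y) (R z) =
    R (t (R x) (R y) z + t (R x) y (R z) + t x (R y) (R z))

def IsNij {K : Type*} [Field K] {A : Type*} [AddCommGroup A] [Module K A]
    (t : A → A → A → A) (N : A →ₗ[K] A) : Prop :=
  ∀ x y z, t (N x) (N y) (N z) =
    N (t (N x) (N y) z) + N (t x (N y) (N z)) + N (t (N x) y (N z))
      - N (N (t (N x) y z)) - N (N (t x (N y) z)) - N (N (t x y (N z)))
      + N (N (N (t x y z)))

def tT {K : Type*} [Field K] {L V : Type*} [AddCommGroup L] [Module K L]
    [AddCommGroup V] [Module K V]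
    (l m r : L → L → V → V) (T : V →ₗ[K] L) (u v w : V) : V :=
  l (T u) (T v) w + m (T u) (T w) v + r (T v) (T w) u

def lT {K : Type*} [Field K] {L V : Type*} [AddCommGroup L] [Module K L]
    [AddCommGroup V] [Module K V]
    (t : L → L → L → L) (m r : L → L → V → V) (T : V →ₗ[K] L)
    (u v : V) (x : L) : L :=
  t (T u) (T v) x - T (r (T v) x u + m (T u) x v)

def mT {K : Type*} [Field K] {L V : Type*} [AddCommGroup L] [Module K L]
    [AddCommGroup V] [Module K V]
    (t : L → L → L → L) (l r : L → L → V → V) (T : V →ₗ[K] L)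
    (u v : V) (x : L) : L :=
  t (T u) x (T v) - T (l (T u) x v + r x (T v) u)

def rT {K : Type*} [Field K] {L V : Type*} [AddCommGroup L] [Module K L]
    [AddCommGroup V] [Module K V]
    (t : L → L → L → L) (l m : L → L → V → V) (T : V →ₗ[K] L)
    (u v : V) (x : L) : L :=
  t x (T u) (T v) - T (l x (T u) v + m x (T v) u)

section Trilinear

variable {K : Type*} [Field K] {A M : Type*} [AddCommGroup A] [Module K A]
  [AddCommGroup M] [Module K M]

def IsTrilin.toLinearMap {t : A → A → A → M} (ht : IsTrilin K t) :
    A →ₗ[K] A →ₗ[K] A →ₗ[K] M where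
  toFun x :=
    { toFun := fun y => ⟨⟨t x y, (ht.2.2 x y).map_add⟩, (ht.2.2 x y).map_smul⟩
      map_add' := fun y y' => LinearMap.ext fun z => (ht.2.1 x z).map_add y y'
      map_smul' := fun c y => LinearMap.ext fun z => (ht.2.1 x z).map_smul c y }
  map_add' x x' := LinearMap.ext fun y => LinearMap.ext fun z => (ht.1 y z).map_add x x'
  map_smul' c x := LinearMap.ext fun y => LinearMap.ext fun z => (ht.1 y z).map_smul c x

theorem IsTrilin.exists_eq_linearMap {t : A → A → A → M} (ht : IsTrilin K t) :
    ∃ Φ : A →ₗ[K] A →ₗ[K] A →ₗ[K] M, t = fun x y z => Φ x y z :=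
  ⟨ht.toLinearMap, rfl⟩

theorem IsTrilin.map_zero_left {t : A → A → A → M} (ht : IsTrilin K t) (y z : A) : t 0 y z = 0 :=
  (IsLinearMap.mk' _ (ht.1 y z)).map_zero

theorem IsTrilin.map_zero_mid {t : A → A → A → M} (ht : IsTrilin K t) (x z : A) : t x 0 z = 0 :=
  (IsLinearMap.mk' _ (ht.2.1 x z)).map_zero

theorem IsTrilin.map_zero_right {t : A → A → A → M} (ht : IsTrilin K t) (x y : A) : t x y 0 = 0 :=
  (IsLinearMap.mk' _ (ht.2.2 x y)).map_zero

end Trilinear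

section Deformation

variable {K : Type*} [Field K] {A : Type*} [AddCommGroup A] [Module K A]
  {t : A → A → A → A} {N : A →ₗ[K] A}

-- The Nijenhuis-deformed bracket without its `N (N (t a b c))` term, which vanishes when
-- `N ∘ N = 0`.
def deformBracket (t : A → A → A → A) (N : A →ₗ[K] A) (a b c : A) : A :=
  t (N a) (N b) c + t (N a) b (N c) + t a (N b) (N c)
    - N (t (N a) b c) - N (t a (N b) c) - N (t a b (N c))

theorem IsTrilin.deformBracket (ht : IsTrilin K t) : IsTrilin K (deformBracket t N) := by
  obtain ⟨Φ, rfl⟩ := ht.exists_eq_linearMap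
  refine ⟨fun y z => ⟨fun x x' => ?_, fun c x => ?_⟩, fun x z => ⟨fun y y' => ?_, fun c y => ?_⟩,
    fun x y => ⟨fun z z' => ?_, fun c z => ?_⟩⟩ <;>
  simp only [_root_.deformBracket, map_add, map_smul, LinearMap.add_apply, LinearMap.smul_apply,
    smul_add, smul_sub] <;>
  abel

theorem IsLTS.deformBracket_ident₁ (ht : IsLTS K t) (hN : ∀ x, N (N x) = 0) (hRB : IsRB t N)
    (a b c d e : A) :
    deformBracket t N a b (deformBracket t N c d e) =
      deformBracket t N (deformBracket t N a b c) d e - deformBracket t N (deformBracket t N a b d) c e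
        - deformBracket t N (deformBracket t N a b e) c d
        + deformBracket t N (deformBracket t N a b e) d c := by
  obtain ⟨htri, h1, -⟩ := ht
  obtain ⟨Φ, rfl⟩ := htri.exists_eq_linearMap
  unfold IsRB at hRB
  dsimp only at h1 hRB
  -- the identity at `(x, y, N c, N d, N e)`, with `Φ (N c) (N d) (N e)` expanded by `hRB`
  have key : ∀ x y, Φ x y (N (Φ (N c) (N d) e)) + Φ x y (N (Φ (N c) d (N e)))
      + Φ x y (N (Φ c (N d) (N e))) = Φ (Φ x y (N c)) (N d) (N e) - Φ (Φ x y (N d)) (N c) (N e)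
        - Φ (Φ x y (N e)) (N c) (N d) + Φ (Φ x y (N e)) (N d) (N c) := fun x y => by
    rw [← map_add, ← map_add, ← map_add, ← map_add, ← hRB c d e, h1]
  have keyN := congrArg N (key a b)
  simp only [map_add, map_sub] at keyN
  simp only [deformBracket, map_add, map_sub, LinearMap.add_apply, LinearMap.sub_apply, hN,
    sub_zero, hRB, h1]
  linear_combination (norm := abel1) key (N a) b + key a (N b) - keyN

theorem IsLTS.deformBracket_ident₂ (ht : IsLTS K t) (hN : ∀ x, N (N x) = 0) (hRB : IsRB t N)
    (a b c d e : A) :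
    deformBracket t N a (deformBracket t N b c d) e =
      deformBracket t N (deformBracket t N a b c) d e - deformBracket t N (deformBracket t N a c b) d e
        - deformBracket t N (deformBracket t N a d b) c e
        + deformBracket t N (deformBracket t N a d c) b e := by
  obtain ⟨htri, -, h2⟩ := ht
  obtain ⟨Φ, rfl⟩ := htri.exists_eq_linearMap
  unfold IsRB at hRB
  dsimp only at h2 hRB
  have key : ∀ x z, Φ x (N (Φ (N b) (N c) d)) z + Φ x (N (Φ (N b) c (N d))) z
      + Φ x (N (Φ b (N c) (N d))) z = Φ (Φ x (N b) (N c)) (N d) z - Φ (Φ x (N c) (N b)) (N d) z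
        - Φ (Φ x (N d) (N b)) (N c) z + Φ (Φ x (N d) (N c)) (N b) z := fun x z => by
    rw [← LinearMap.add_apply, ← LinearMap.add_apply, ← map_add, ← map_add, ← map_add, ← map_add,
      ← hRB b c d, h2]
  have key₁ := key (N a) e
  have key₂ := key a (N e)
  have keyN := congrArg N (key a e)
  simp only [map_add, map_sub, LinearMap.add_apply, hRB] at key₁ key₂ keyN
  simp only [deformBracket, map_add, map_sub, LinearMap.add_apply, LinearMap.sub_apply, hN,
    sub_zero, hRB, h2]
  linear_combination (norm := abel1) key₁ + key₂ - keyN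

theorem IsLTS.deformBracket (ht : IsLTS K t) (hN : ∀ x, N (N x) = 0) (hRB : IsRB t N) :
    IsLTS K (deformBracket t N) :=
  ⟨ht.1.deformBracket, ht.deformBracket_ident₁ hN hRB, ht.deformBracket_ident₂ hN hRB⟩

theorem IsLTS.conj_linearEquiv {B : Type*} [AddCommGroup B] [Module K B] (e : B ≃ₗ[K] A)
    (ht : IsLTS K t) :
    IsLTS K fun p q s => e.symm (t (e p) (e q) (e s)) := by
  obtain ⟨htri, h1, h2⟩ := ht
  obtain ⟨Φ, rfl⟩ := htri.exists_eq_linearMap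
  refine ⟨⟨fun y z => ⟨fun x x' => ?_, fun c x => ?_⟩, fun x z => ⟨fun y y' => ?_, fun c y => ?_⟩,
    fun x y => ⟨fun z z' => ?_, fun c z => ?_⟩⟩, fun a b c d e' => ?_, fun a b c d e' => ?_⟩ <;>
  simp only [map_add, map_smul, LinearMap.add_apply, LinearMap.smul_apply,
    LinearEquiv.apply_symm_apply, h1, h2, map_sub]

end Deformation

section Semidirect

variable {K : Type*} [Field K] {L V : Type*} [AddCommGroup L] [Module K L]
  [AddCommGroup V] [Module K V] {t : L → L → L → L} {l m r : L → L → V → V}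

-- `IsRep` sees `l`, `m`, `r` only through the sums in `sd`, so the three terms need not vanish
-- separately.
theorem IsRep.act_zero (hrep : IsRep K t l m r) (x y z : L) : l x y 0 + m x z 0 + r y z 0 = 0 := by
  have hsd : IsTrilin K (sd t l m r) := hrep.1
  have h₁ (y z : L) (v w : V) := congrArg Prod.snd (hsd.map_zero_left (y, v) (z, w))
  have h₂ (x z : L) (u w : V) := congrArg Prod.snd (hsd.map_zero_mid (x, u) (z, w))
  have h₃ (x y : L) (u v : V) := congrArg Prod.snd (hsd.map_zero_right (x, u) (y, v))
  simp only [sd, Prod.fst_zero, Prod.snd_zero] at h₁ h₂ h₃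
  linear_combination (norm := abel1) h₃ x y 0 0 + h₂ x z 0 0 + h₁ y z 0 0 - h₂ x 0 0 0
    - h₁ 0 z 0 0 - h₃ 0 y 0 0 + h₁ 0 0 0 0

def sdLift (T : V →ₗ[K] L) : L × V →ₗ[K] L × V :=
  LinearMap.inl K L V ∘ₗ T ∘ₗ LinearMap.snd K L V

@[simp]
theorem sdLift_apply (T : V →ₗ[K] L) (p : L × V) : sdLift T p = (T p.2, 0) := rfl

theorem sdLift_sdLift (T : V →ₗ[K] L) (p : L × V) : sdLift T (sdLift T p) = 0 := by
  simp

theorem IsRRB.isRB_sdLift {T : V →ₗ[K] L} (hT : IsRRB t l m r T) (hrep : IsRep K t l m r) :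
    IsRB (sd t l m r) (sdLift T) := by
  intro p q s
  have h₀ := hrep.act_zero
  ext
  · have hT₀ (x y z : L) := congrArg T (h₀ x y z)
    have hTpqs := hT p.2 q.2 s.2
    simp only [map_add, map_zero] at hT₀ hTpqs
    simp only [sd, sdLift_apply, Prod.fst_add, map_add]
    linear_combination (norm := abel1) hTpqs - hT₀ (T p.2) (T q.2) s.1
      - hT₀ (T p.2) q.1 (T s.2) - hT₀ p.1 (T q.2) (T s.2) + hT₀ (T p.2) (T q.2) (T s.2)
  · exact h₀ _ _ _

theorem sd_tT_eq_deformBracket (hrep : IsRep K t l m r) (T : V →ₗ[K] L) (p q s : V × L) :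
    sd (tT l m r T) (lT t m r T) (mT t l r T) (rT t l m T) p q s =
      (deformBracket (sd t l m r) (sdLift T) p.swap q.swap s.swap).swap := by
  have h₀ := hrep.act_zero
  ext
  · simp only [sd, deformBracket, tT, sdLift_apply, Prod.swap, Prod.snd_add, Prod.snd_sub]
    linear_combination (norm := abel1) - h₀ (T p.1) (T q.1) s.2 - h₀ (T p.1) q.2 (T s.1)
      - h₀ p.2 (T q.1) (T s.1) + h₀ (T p.1) (T q.1) (T s.1)
  · have hT₀ (x y z : L) := congrArg T (h₀ x y z)
    simp only [map_add, map_zero] at hT₀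
    simp only [sd, deformBracket, lT, mT, rT, sdLift_apply, Prod.swap, Prod.fst_add, Prod.fst_sub,
      map_add]
    linear_combination (norm := abel1) hT₀ p.2 q.2 s.2

end Semidirect

theorem stmt9_general {K : Type*} [Field K] {L V : Type*} [AddCommGroup L] [Module K L]
    [AddCommGroup V] [Module K V]
    (t : L → L → L → L) (l m r : L → L → V → V)
    (hrep : IsRep K t l m r)
    (T : V →ₗ[K] L) (hT : IsRRB t l m r T) :
    IsRep K (tT l m r T) (lT t m r T) (mT t l r T) (rT t l m T) := by
  have hdeform : IsLTS K (deformBracket (sd t l m r) (sdLift T)) :=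
    IsLTS.deformBracket hrep (sdLift_sdLift T) (hT.isRB_sdLift hrep)
  have hswap := hdeform.conj_linearEquiv (LinearEquiv.prodComm K V L)
  unfold IsRep
  convert hswap using 1
  funext p q s
  exact sd_tT_eq_deformBracket hrep T p q s

theorem stmt9 {K : Type*} [Field K] {L V : Type*} [AddCommGroup L] [Module K L]
    [AddCommGroup V] [Module K V]
    (t : L → L → L → L) (l m r : L → L → V → V)
    (hL : IsLTS K t) (hrep : IsRep K t l m r)
    (T : V →ₗ[K] L) (hT : IsRRB t l m r T) :
    IsRep K (tT l m r T) (lT t m r T) (mT t l r T) (rT t l m T) :=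
  stmt9_general t l m r hrep T hT
end

section
/- Let $T_t = \sum_{i=0}^{n}\mathfrak{T}_i t^i$ be an order $n$ deformation of a relative Rota-Baxter operator $T$ on a Leibniz triple system $(\mathfrak{L},\{\cdot,\cdot,\cdot\})$ with respect to a representation $(r,m,l)$ on $V$. Then $T_t$ extends to an order $n+1$ deformation if and only if the cohomology class of the obstruction cochain $\mathrm{Ob}_T(u,v,w) = \sum_{i+j+k=n+1,\ 0\leq i,j,k\leq n}\big(\{\mathfrak{T}_iu,\mathfrak{T}_jv,\mathfrak{T}_kw\} - \mathfrak{T}_i(l(\mathfrak{T}_ju,\mathfrak{T}_kv)w + m(\mathfrak{T}_ku,\mathfrak{T}_jw)v + r(\mathfrak{T}_jv,\mathfrak{T}_kw)u)\big)$ is trivial; i.e., there exists $\mathfrak{T}_{n+1}:V\to\mathfrak{L}$ with $\mathrm{Ob}_T = -\partial^1\mathfrak{T}_{n+1}$. -/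
namespace Finset

theorem sum_triangle_ite_eq {M : Type*} [AddCommMonoid M] {n a b : ℕ} (ha : a < n + 2)
    (hb : b < n + 2 - a) (d : M) :
    (∑ i ∈ range (n + 2), ∑ j ∈ range (n + 2 - i), if i = a ∧ j = b then d else 0) = d := by
  rw [sum_eq_single_of_mem a (mem_range.mpr ha) fun i _ hi => by simp [hi],
    sum_eq_single_of_mem b (mem_range.mpr hb) fun j _ hj => by simp [hj]]
  simp

theorem sum_triangle_eq_sum_interior_add_corners {M : Type*} [AddCommMonoid M] (n : ℕ)
    (F : ℕ → ℕ → M) :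
    (∑ i ∈ range (n + 2), ∑ j ∈ range (n + 2 - i), F i j) =
      (∑ i ∈ range (n + 2), ∑ j ∈ range (n + 2 - i),
        if i ≤ n ∧ j ≤ n ∧ n + 1 - i - j ≤ n then F i j else 0) +
      (F (n + 1) 0 + F 0 (n + 1) + F 0 0) := by
  have split : ∀ i < n + 2, ∀ j < n + 2 - i, F i j =
      (if i ≤ n ∧ j ≤ n ∧ n + 1 - i - j ≤ n then F i j else 0) +
        ((if i = n + 1 ∧ j = 0 then F (n + 1) 0 else 0) +
          (if i = 0 ∧ j = n + 1 then F 0 (n + 1) else 0) +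
          (if i = 0 ∧ j = 0 then F 0 0 else 0)) := by
    intro i hi j hj
    split_ifs <;> first | omega | simp_all
  rw [sum_congr rfl fun i hi => sum_congr rfl fun j hj =>
    split i (mem_range.mp hi) j (mem_range.mp hj)]
  simp only [sum_add_distrib]
  rw [sum_triangle_ite_eq (by omega) (by omega), sum_triangle_ite_eq (by omega) (by omega),
    sum_triangle_ite_eq (by omega) (by omega)]

end Finset

open Finset

section RelativeRotaBaxter

variable {L V : Type*} [AddCommGroup L] [AddCommGroup V]
  (t : L → L → L → L) (l m r : L → L → V → V)

def rrbDefect (A B C : V → L) (u v w : V) : L :=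
  t (A u) (B v) (C w) - A (l (B u) (C v) w + m (C u) (B w) v + r (B v) (C w) u)

def rrbCoboundary (T f : V → L) (u v w : V) : L :=
  t (f u) (T v) (T w) - T (l (f u) (T v) w + m (f u) (T w) v)
    + t (T u) (f v) (T w) - T (l (T u) (f v) w + r (f v) (T w) u)
    + t (T u) (T v) (f w) - T (m (T u) (f w) v + r (T v) (f w) u)
    - f (l (T u) (T v) w + m (T u) (T w) v + r (T v) (T w) u)

theorem rrbDefect_add_add_eq_rrbCoboundary {F : Type*} [FunLike F V L] [AddHomClass F V L]
    (T : F) (f : V → L) (u v w : V) :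
    rrbDefect t l m r f T T u v w + rrbDefect t l m r T f T u v w +
      rrbDefect t l m r T T f u v w = rrbCoboundary t l m r T f u v w := by
  simp only [rrbDefect, rrbCoboundary, map_add]
  abel

def rrbObstruction {F : Type*} [FunLike F V L] (n : ℕ) (𝔗 : ℕ → F) (u v w : V) : L :=
  ∑ i ∈ range (n + 2), ∑ j ∈ range (n + 2 - i),
    if i ≤ n ∧ j ≤ n ∧ n + 1 - i - j ≤ n then
      rrbDefect t l m r (𝔗 i) (𝔗 j) (𝔗 (n + 1 - i - j)) u v w else 0

theorem sum_rrbDefect_extend_eq_rrbObstruction_add_rrbCoboundary {F : Type*} [FunLike F V L]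
    [AddHomClass F V L] (n : ℕ) (𝔗 : ℕ → F) (N : F) (u v w : V) :
    let S i := if i = n + 1 then N else 𝔗 i
    (∑ i ∈ range (n + 2), ∑ j ∈ range (n + 2 - i),
      rrbDefect t l m r (S i) (S j) (S (n + 1 - i - j)) u v w) =
      rrbObstruction t l m r n 𝔗 u v w + rrbCoboundary t l m r (𝔗 0) N u v w := by
  intro S
  have hS_le : ∀ i ≤ n, S i = 𝔗 i := fun i hi => if_neg (by omega)
  have hS_top : S (n + 1) = N := if_pos rfl
  have hS_zero : S 0 = 𝔗 0 := hS_le 0 n.zero_le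
  rw [sum_triangle_eq_sum_interior_add_corners, ← rrbDefect_add_add_eq_rrbCoboundary]
  simp only [Nat.sub_self, Nat.sub_zero, hS_top, hS_zero]
  congr 1
  refine sum_congr rfl fun i _ => sum_congr rfl fun j _ => if_ctx_congr Iff.rfl ?_ fun _ => rfl
  rintro ⟨hi, hj, hk⟩
  rw [hS_le i hi, hS_le j hj, hS_le _ hk]

end RelativeRotaBaxter

theorem stmt14_general {K : Type*} [Field K] {L V : Type*} [AddCommGroup L] [Module K L]
    [AddCommGroup V] [Module K V]
    (t : L → L → L → L) (l m r : L → L → V → V)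
    (n : ℕ) (𝔗 : ℕ → (V →ₗ[K] L)) :
    -- `T_t` is extendable
    (∃ Tnext : V →ₗ[K] L, ∀ u v w : V,
      (∑ i ∈ Finset.range (n + 2), ∑ j ∈ Finset.range (n + 2 - i),
        t ((if i = n + 1 then Tnext else 𝔗 i) u)
          ((if j = n + 1 then Tnext else 𝔗 j) v)
          ((if n + 1 - i - j = n + 1 then Tnext else 𝔗 (n + 1 - i - j)) w)) =
      ∑ i ∈ Finset.range (n + 2), ∑ j ∈ Finset.range (n + 2 - i),
        (if i = n + 1 then Tnext else 𝔗 i)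
          (l ((if j = n + 1 then Tnext else 𝔗 j) u)
              ((if n + 1 - i - j = n + 1 then Tnext else 𝔗 (n + 1 - i - j)) v) w
            + m ((if n + 1 - i - j = n + 1 then Tnext else 𝔗 (n + 1 - i - j)) u)
              ((if j = n + 1 then Tnext else 𝔗 j) w) v
            + r ((if j = n + 1 then Tnext else 𝔗 j) v)
              ((if n + 1 - i - j = n + 1 then Tnext else 𝔗 (n + 1 - i - j)) w) u))
    ↔
    -- the obstruction class is trivial: `Ob_T = -∂¹ 𝔗_{n+1}`
    (∃ Tnext : V →ₗ[K] L, ∀ u v w : V,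
      (∑ i ∈ Finset.range (n + 2), ∑ j ∈ Finset.range (n + 2 - i),
        if i ≤ n ∧ j ≤ n ∧ n + 1 - i - j ≤ n then
          t (𝔗 i u) (𝔗 j v) (𝔗 (n + 1 - i - j) w)
            - 𝔗 i (l (𝔗 j u) (𝔗 (n + 1 - i - j) v) w
              + m (𝔗 (n + 1 - i - j) u) (𝔗 j w) v
              + r (𝔗 j v) (𝔗 (n + 1 - i - j) w) u)
        else 0) =
      -(t (Tnext u) (𝔗 0 v) (𝔗 0 w)
          - 𝔗 0 (l (Tnext u) (𝔗 0 v) w + m (Tnext u) (𝔗 0 w) v)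
          + t (𝔗 0 u) (Tnext v) (𝔗 0 w)
          - 𝔗 0 (l (𝔗 0 u) (Tnext v) w + r (Tnext v) (𝔗 0 w) u)
          + t (𝔗 0 u) (𝔗 0 v) (Tnext w)
          - 𝔗 0 (m (𝔗 0 u) (Tnext w) v + r (𝔗 0 v) (Tnext w) u)
          - Tnext (l (𝔗 0 u) (𝔗 0 v) w + m (𝔗 0 u) (𝔗 0 w) v
            + r (𝔗 0 v) (𝔗 0 w) u))) := by
  refine exists_congr fun N => forall_congr' fun u => forall_congr' fun v =>
    forall_congr' fun w => ?_
  rw [← sub_eq_zero, ← sum_sub_distrib, ← add_eq_zero_iff_eq_neg]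
  simp only [← sum_sub_distrib]
  exact Eq.congr_left
    (sum_rrbDefect_extend_eq_rrbObstruction_add_rrbCoboundary t l m r n 𝔗 N u v w)

theorem stmt14 {K : Type*} [Field K] {L V : Type*} [AddCommGroup L] [Module K L]
    [AddCommGroup V] [Module K V]
    (t : L → L → L → L) (l m r : L → L → V → V)
    (hL : IsLTS K t) (hrep : IsRep K t l m r)
    (n : ℕ) (𝔗 : ℕ → (V →ₗ[K] L)) (hT : IsRRB t l m r (𝔗 0))
    (hdef : ∀ s ≤ n, ∀ u v w : V,
      (∑ i ∈ Finset.range (s + 1), ∑ j ∈ Finset.range (s + 1 - i),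
        t (𝔗 i u) (𝔗 j v) (𝔗 (s - i - j) w)) =
      ∑ i ∈ Finset.range (s + 1), ∑ j ∈ Finset.range (s + 1 - i),
        𝔗 i (l (𝔗 j u) (𝔗 (s - i - j) v) w + m (𝔗 (s - i - j) u) (𝔗 j w) v
          + r (𝔗 j v) (𝔗 (s - i - j) w) u)) :
    -- `T_t` is extendable
    (∃ Tnext : V →ₗ[K] L, ∀ u v w : V,
      (∑ i ∈ Finset.range (n + 2), ∑ j ∈ Finset.range (n + 2 - i),
        t ((if i = n + 1 then Tnext else 𝔗 i) u)
          ((if j = n + 1 then Tnext else 𝔗 j) v)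
          ((if n + 1 - i - j = n + 1 then Tnext else 𝔗 (n + 1 - i - j)) w)) =
      ∑ i ∈ Finset.range (n + 2), ∑ j ∈ Finset.range (n + 2 - i),
        (if i = n + 1 then Tnext else 𝔗 i)
          (l ((if j = n + 1 then Tnext else 𝔗 j) u)
              ((if n + 1 - i - j = n + 1 then Tnext else 𝔗 (n + 1 - i - j)) v) w
            + m ((if n + 1 - i - j = n + 1 then Tnext else 𝔗 (n + 1 - i - j)) u)
              ((if j = n + 1 then Tnext else 𝔗 j) w) v
            + r ((if j = n + 1 then Tnext else 𝔗 j) v)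
              ((if n + 1 - i - j = n + 1 then Tnext else 𝔗 (n + 1 - i - j)) w) u))
    ↔
    -- the obstruction class is trivial: `Ob_T = -∂¹ 𝔗_{n+1}`
    (∃ Tnext : V →ₗ[K] L, ∀ u v w : V,
      (∑ i ∈ Finset.range (n + 2), ∑ j ∈ Finset.range (n + 2 - i),
        if i ≤ n ∧ j ≤ n ∧ n + 1 - i - j ≤ n then
          t (𝔗 i u) (𝔗 j v) (𝔗 (n + 1 - i - j) w)
            - 𝔗 i (l (𝔗 j u) (𝔗 (n + 1 - i - j) v) w
              + m (𝔗 (n + 1 - i - j) u) (𝔗 j w) v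
              + r (𝔗 j v) (𝔗 (n + 1 - i - j) w) u)
        else 0) =
      -(t (Tnext u) (𝔗 0 v) (𝔗 0 w)
          - 𝔗 0 (l (Tnext u) (𝔗 0 v) w + m (Tnext u) (𝔗 0 w) v)
          + t (𝔗 0 u) (Tnext v) (𝔗 0 w)
          - 𝔗 0 (l (𝔗 0 u) (Tnext v) w + r (Tnext v) (𝔗 0 w) u)
          + t (𝔗 0 u) (𝔗 0 v) (Tnext w)
          - 𝔗 0 (m (𝔗 0 u) (Tnext w) v + r (𝔗 0 v) (Tnext w) u)
          - Tnext (l (𝔗 0 u) (𝔗 0 v) w + m (𝔗 0 u) (𝔗 0 w) v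
            + r (𝔗 0 v) (𝔗 0 w) u))) :=
  stmt14_general t l m r n 𝔗
end
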